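/- Inquisitive (global) disjunction ⩔ is strongly undefinable in extended propositional dependence logic D⁺: for every context φ(a,b) of D⁺ (allowing generalized dependence atoms =(α₁,…,αₙ;β) over classical formulas) and distinct atoms p, q not occurring in φ(a,b), the formula φ(=(p),=(q)) is not equivalent in the model M_{pq} to =(p) ⩔ =(q). -/
import Mathlib


/-- Classical formulas: literals, ⊥, conjunction, tensor. -/
inductive CForm (α : Type) : Type
  | atom : α → CForm α
  | natom : α → CForm α
  | bot : CForm α
  | and : CForm α → CForm α → CForm α
  | tensor : CForm α → CForm α → CForm α

/-- Support semantics for classical formulas. -/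
def csupports {W α : Type} (V : W → α → Prop) : Set W → CForm α → Prop
  | s, .atom p => ∀ w ∈ s, V w p
  | s, .natom p => ∀ w ∈ s, ¬ V w p
  | s, .bot => s = ∅
  | s, .and ψ χ => csupports V s ψ ∧ csupports V s χ
  | s, .tensor ψ χ => ∃ t₁ t₂, csupports V t₁ ψ ∧ csupports V t₂ χ ∧ s = t₁ ∪ t₂

/-- Atoms occurring in a classical formula. -/
def CForm.catoms {α : Type} : CForm α → Set α
  | .atom r => {r}
  | .natom r => {r}
  | .bot => ∅
  | .and ψ χ => ψ.catoms ∪ χ.catoms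
  | .tensor ψ χ => ψ.catoms ∪ χ.catoms

/-- Formulas of extended propositional dependence logic D⁺, with generalized
dependence atoms =(α₁,…,αₙ;β) over classical formulas. -/
inductive DPForm (α : Type) : Type
  | atom : α → DPForm α
  | natom : α → DPForm α
  | bot : DPForm α
  | gdep : List (CForm α) → CForm α → DPForm α
  | and : DPForm α → DPForm α → DPForm α
  | tensor : DPForm α → DPForm α → DPForm α

/-- Support semantics for D⁺: a state supports =(α⃗;β) iff any two of its
worlds that agree (as singletons) on the conjunction of α⃗ agree on β. -/
def dpsupports {W α : Type} (V : W → α → Prop) : Set W → DPForm α → Prop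
  | s, .atom p => ∀ w ∈ s, V w p
  | s, .natom p => ∀ w ∈ s, ¬ V w p
  | s, .bot => s = ∅
  | s, .gdep as b => ∀ w ∈ s, ∀ w' ∈ s,
      ((∀ a ∈ as, csupports V ({w} : Set W) a) ↔
        (∀ a ∈ as, csupports V ({w'} : Set W) a)) →
      (csupports V ({w} : Set W) b ↔ csupports V ({w'} : Set W) b)
  | s, .and ψ χ => dpsupports V s ψ ∧ dpsupports V s χ
  | s, .tensor ψ χ =>
      ∃ t₁ t₂, dpsupports V t₁ ψ ∧ dpsupports V t₂ χ ∧ s = t₁ ∪ t₂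

/-- Atoms occurring in a D⁺ formula. -/
def DPForm.dpatoms {α : Type} : DPForm α → Set α
  | .atom r => {r}
  | .natom r => {r}
  | .bot => ∅
  | .gdep as b => {r | ∃ a ∈ as, r ∈ a.catoms} ∪ b.catoms
  | .and ψ χ => ψ.dpatoms ∪ χ.dpatoms
  | .tensor ψ χ => ψ.dpatoms ∪ χ.dpatoms

/-- φ is a D⁺ context with designated atoms a, b: a and b occur neither
negated nor inside a generalized dependence atom. -/
def DPForm.isContext {α : Type} (a b : α) : DPForm α → Prop
  | .atom _ => True
  | .natom r => r ≠ a ∧ r ≠ b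
  | .bot => True
  | .gdep as c => a ∉ ({r | ∃ x ∈ as, r ∈ CForm.catoms x} ∪ c.catoms) ∧
      b ∉ ({r | ∃ x ∈ as, r ∈ CForm.catoms x} ∪ c.catoms)
  | .and ψ χ => ψ.isContext a b ∧ χ.isContext a b
  | .tensor ψ χ => ψ.isContext a b ∧ χ.isContext a b

/-- Substitution of ψ, χ for the designated atoms a, b in a D⁺ context. -/
def dpsubstAB {α : Type} [DecidableEq α] (a b : α) (ψ χ : DPForm α) :
    DPForm α → DPForm α
  | .atom r => if r = a then ψ else if r = b then χ else .atom r
  | .natom r => .natom r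
  | .bot => .bot
  | .gdep as c => .gdep as c
  | .and θ η => .and (dpsubstAB a b ψ χ θ) (dpsubstAB a b ψ χ η)
  | .tensor θ η => .tensor (dpsubstAB a b ψ χ θ) (dpsubstAB a b ψ χ η)

/-- The constancy atom =(p) of D⁺. -/
def pcon {α : Type} (p : α) : DPForm α := DPForm.gdep [] (CForm.atom p)

/-- The model M_pq (worlds w1 = 0, w2 = 1, w3 = 2): p is true exactly at
w1, w2; q is true exactly at w2, w3; every other atom is false everywhere. -/
def VDpq {α : Type} (p q : α) : Fin 3 → α → Prop :=
  fun w r => (r = p ∧ (w = 0 ∨ w = 1)) ∨ (r = q ∧ (w = 1 ∨ w = 2))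

section Aux

variable {W α : Type}

lemma csupports_empty (V : W → α → Prop) (φ : CForm α) :
    csupports V (∅ : Set W) φ := by
  induction φ with
  | atom r => intro w hw; simp at hw
  | natom r => intro w hw; simp at hw
  | bot => rfl
  | and ψ χ ih1 ih2 => exact ⟨ih1, ih2⟩
  | tensor ψ χ ih1 ih2 => exact ⟨∅, ∅, ih1, ih2, by simp⟩

lemma csupports_transfer (V : W → α → Prop) {w w' : W} (φ : CForm α)
    (h : ∀ r ∈ φ.catoms, (V w r ↔ V w' r)) :
    csupports V ({w} : Set W) φ → csupports V ({w'} : Set W) φ := by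
  induction φ with
  | atom r =>
    intro hs x hx
    rw [Set.mem_singleton_iff] at hx; subst hx
    exact (h r (by simp [CForm.catoms])).mp (hs w rfl)
  | natom r =>
    intro hs x hx
    rw [Set.mem_singleton_iff] at hx; subst hx
    exact fun hv => (hs w rfl) ((h r (by simp [CForm.catoms])).mpr hv)
  | bot =>
    intro hs
    exact absurd hs (Set.singleton_ne_empty w)
  | and ψ χ ih1 ih2 =>
    rintro ⟨h1, h2⟩
    exact ⟨ih1 (fun r hr => h r (Or.inl hr)) h1, ih2 (fun r hr => h r (Or.inr hr)) h2⟩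
  | tensor ψ χ ih1 ih2 =>
    rintro ⟨t₁, t₂, h1, h2, he⟩
    have ht₁ : t₁ = ∅ ∨ t₁ = {w} :=
      (Set.subset_singleton_iff_eq).mp (he ▸ Set.subset_union_left)
    have ht₂ : t₂ = ∅ ∨ t₂ = {w} :=
      (Set.subset_singleton_iff_eq).mp (he ▸ Set.subset_union_right)
    rcases ht₁ with rfl | rfl
    · rcases ht₂ with rfl | rfl
      · simp at he
      · exact ⟨∅, {w'}, csupports_empty V ψ,
          ih2 (fun r hr => h r (Or.inr hr)) h2, by simp⟩
    · exact ⟨{w'}, ∅, ih1 (fun r hr => h r (Or.inl hr)) h1,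
        csupports_empty V χ, by simp⟩

lemma dpsupports_empty (V : W → α → Prop) (φ : DPForm α) :
    dpsupports V (∅ : Set W) φ := by
  induction φ with
  | atom r => intro w hw; simp at hw
  | natom r => intro w hw; simp at hw
  | bot => rfl
  | gdep as c => intro w hw; simp at hw
  | and ψ χ ih1 ih2 => exact ⟨ih1, ih2⟩
  | tensor ψ χ ih1 ih2 => exact ⟨∅, ∅, ih1, ih2, by simp⟩

lemma dpsupports_down (V : W → α → Prop) (φ : DPForm α) :
    ∀ {s t : Set W}, t ⊆ s → dpsupports V s φ → dpsupports V t φ := by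
  induction φ with
  | atom r => intro s t hts h w hw; exact h w (hts hw)
  | natom r => intro s t hts h w hw; exact h w (hts hw)
  | bot =>
    intro s t hts h
    have : s = ∅ := h
    subst this
    exact Set.subset_empty_iff.mp hts
  | gdep as c =>
    intro s t hts h w hw w' hw'
    exact h w (hts hw) w' (hts hw')
  | and ψ χ ih1 ih2 =>
    rintro s t hts ⟨h1, h2⟩
    exact ⟨ih1 hts h1, ih2 hts h2⟩
  | tensor ψ χ ih1 ih2 =>
    rintro s t hts ⟨t₁, t₂, h1, h2, rfl⟩
    refine ⟨t₁ ∩ t, t₂ ∩ t, ih1 Set.inter_subset_left h1, ih2 Set.inter_subset_left h2, ?_⟩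
    rw [← Set.union_inter_distrib_right]
    exact (Set.inter_eq_right.mpr hts).symm

variable {p q : α}

lemma vd_other {r : α} (h1 : r ≠ p) (h2 : r ≠ q) (w : Fin 3) :
    ¬ VDpq p q w r := by
  simp [VDpq, h1, h2]

lemma vd_p (hpq : p ≠ q) (w : Fin 3) : VDpq p q w p ↔ (w = 0 ∨ w = 1) := by
  simp [VDpq, hpq]

lemma vd_q (hpq : p ≠ q) (w : Fin 3) : VDpq p q w q ↔ (w = 1 ∨ w = 2) := by
  simp [VDpq, Ne.symm hpq]

lemma pcon_iff (r : α) (s : Set (Fin 3)) :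
    dpsupports (VDpq p q) s (pcon r) ↔
      ∀ w ∈ s, ∀ w' ∈ s, (VDpq p q w r ↔ VDpq p q w' r) := by
  simp [pcon, dpsupports, csupports]

lemma gdep_all (as : List (CForm α)) (c : CForm α)
    (hpc : ∀ r, (∃ x ∈ as, r ∈ CForm.catoms x) ∨ r ∈ c.catoms → r ≠ p ∧ r ≠ q)
    (s : Set (Fin 3)) :
    dpsupports (VDpq p q) s (DPForm.gdep as c) := by
  intro w hw w' hw' _
  constructor
  · exact csupports_transfer _ c (fun r hr =>
      iff_of_false (vd_other (hpc r (Or.inr hr)).1 (hpc r (Or.inr hr)).2 w)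
        (vd_other (hpc r (Or.inr hr)).1 (hpc r (Or.inr hr)).2 w'))
  · exact csupports_transfer _ c (fun r hr =>
      iff_of_false (vd_other (hpc r (Or.inr hr)).1 (hpc r (Or.inr hr)).2 w')
        (vd_other (hpc r (Or.inr hr)).1 (hpc r (Or.inr hr)).2 w))

/-- The invariant: all singletons equi-supported, and {0,2} supported iff
both {0,1} and {1,2} are. -/
def DPInv (p q : α) (θ : DPForm α) : Prop :=
  (dpsupports (VDpq p q) ({0} : Set (Fin 3)) θ ↔
    dpsupports (VDpq p q) ({1} : Set (Fin 3)) θ) ∧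
  (dpsupports (VDpq p q) ({1} : Set (Fin 3)) θ ↔
    dpsupports (VDpq p q) ({2} : Set (Fin 3)) θ) ∧
  (dpsupports (VDpq p q) ({0, 2} : Set (Fin 3)) θ ↔
    (dpsupports (VDpq p q) ({0, 1} : Set (Fin 3)) θ ∧
      dpsupports (VDpq p q) ({1, 2} : Set (Fin 3)) θ))

lemma dpinv_pcon_p (hpq : p ≠ q) : DPInv p q (pcon p) := by
  refine ⟨?_, ?_, ?_⟩ <;>
    simp only [pcon_iff, vd_p hpq, Set.mem_singleton_iff, Set.mem_insert_iff] <;>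
    constructor <;> intro h
  · rintro w rfl w' rfl; tauto
  · rintro w rfl w' rfl; tauto
  · rintro w rfl w' rfl; tauto
  · rintro w rfl w' rfl; tauto
  · exfalso
    have := h 0 (by tauto) 2 (by tauto)
    revert this; decide
  · exfalso
    have := h.2 1 (by tauto) 2 (by tauto)
    revert this; decide

lemma dpinv_pcon_q (hpq : p ≠ q) : DPInv p q (pcon q) := by
  refine ⟨?_, ?_, ?_⟩ <;>
    simp only [pcon_iff, vd_q hpq, Set.mem_singleton_iff, Set.mem_insert_iff] <;>
    constructor <;> intro h
  · rintro w rfl w' rfl; tauto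
  · rintro w rfl w' rfl; tauto
  · rintro w rfl w' rfl; tauto
  · rintro w rfl w' rfl; tauto
  · exfalso
    have := h 0 (by tauto) 2 (by tauto)
    revert this; decide
  · exfalso
    have := h.1 0 (by tauto) 1 (by tauto)
    revert this; decide

end Aux

section Main

variable {α : Type} [DecidableEq α]

set_option maxHeartbeats 1000000 in
lemma dpinv_main {p q a b : α}
    (hpq : p ≠ q) :
    ∀ φ : DPForm α, DPForm.isContext a b φ → p ∉ φ.dpatoms → q ∉ φ.dpatoms →
      DPInv p q (dpsubstAB a b (pcon p) (pcon q) φ) := by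
  intro φ
  induction φ with
  | atom r =>
    intro _ hp hq
    simp only [DPForm.dpatoms, Set.mem_singleton_iff] at hp hq
    by_cases hra : r = a
    · subst hra
      simp only [dpsubstAB, if_pos rfl]
      exact dpinv_pcon_p hpq
    · by_cases hrb : r = b
      · subst hrb
        simp only [dpsubstAB, if_neg hra, if_pos rfl]
        exact dpinv_pcon_q hpq
      · simp only [dpsubstAB, if_neg hra, if_neg hrb]
        have hf : ∀ (x : Fin 3) (s : Set (Fin 3)), x ∈ s →
            ¬ dpsupports (VDpq p q) s (DPForm.atom r) := by
          intro x s hx h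
          exact vd_other (fun h' => hp h'.symm) (fun h' => hq h'.symm) x (h x hx)
        exact ⟨iff_of_false (hf 0 _ (by simp)) (hf 1 _ (by simp)),
          iff_of_false (hf 1 _ (by simp)) (hf 2 _ (by simp)),
          iff_of_false (hf 0 _ (by simp)) (fun hc => hf 0 _ (by simp) hc.1)⟩
  | natom r =>
    intro _ hp hq
    simp only [DPForm.dpatoms, Set.mem_singleton_iff] at hp hq
    have hall : ∀ s : Set (Fin 3), dpsupports (VDpq p q) s (DPForm.natom r) :=
      fun s w _ => vd_other (fun h' => hp h'.symm) (fun h' => hq h'.symm) w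
    exact ⟨iff_of_true (hall _) (hall _), iff_of_true (hall _) (hall _),
      iff_of_true (hall _) ⟨hall _, hall _⟩⟩
  | bot =>
    intro _ _ _
    have hf : ∀ (x : Fin 3) (s : Set (Fin 3)), x ∈ s →
        ¬ dpsupports (VDpq p q) s DPForm.bot := by
      intro x s hx h
      have h' : s = ∅ := h
      rw [h'] at hx
      simp at hx
    exact ⟨iff_of_false (hf 0 _ (by simp)) (hf 1 _ (by simp)),
      iff_of_false (hf 1 _ (by simp)) (hf 2 _ (by simp)),
      iff_of_false (hf 0 _ (by simp)) (fun hc => hf 0 _ (by simp) hc.1)⟩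
  | gdep as c =>
    intro _ hp hq
    simp only [DPForm.dpatoms] at hp hq
    have hall : ∀ s : Set (Fin 3), dpsupports (VDpq p q) s (DPForm.gdep as c) := by
      refine gdep_all as c (fun r hr => ⟨?_, ?_⟩)
      · rintro rfl; exact hp hr
      · rintro rfl; exact hq hr
    exact ⟨iff_of_true (hall _) (hall _), iff_of_true (hall _) (hall _),
      iff_of_true (hall _) ⟨hall _, hall _⟩⟩
  | and ψ χ ih1 ih2 =>
    intro hctx hp hq
    obtain ⟨a1, a2, a3⟩ := ih1 hctx.1 (fun h => hp (Or.inl h)) (fun h => hq (Or.inl h))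
    obtain ⟨b1, b2, b3⟩ := ih2 hctx.2 (fun h => hp (Or.inr h)) (fun h => hq (Or.inr h))
    refine ⟨and_congr a1 b1, and_congr a2 b2, ?_⟩
    constructor
    · rintro ⟨h1, h2⟩
      exact ⟨⟨(a3.mp h1).1, (b3.mp h2).1⟩, ⟨(a3.mp h1).2, (b3.mp h2).2⟩⟩
    · rintro ⟨⟨h1, h2⟩, ⟨h3, h4⟩⟩
      exact ⟨a3.mpr ⟨h1, h3⟩, b3.mpr ⟨h2, h4⟩⟩
  | tensor ψ χ ih1 ih2 =>
    intro hctx hp hq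
    set V := VDpq p q with hV
    set θ₁ := dpsubstAB a b (pcon p) (pcon q) ψ with hθ₁
    set θ₂ := dpsubstAB a b (pcon p) (pcon q) χ with hθ₂
    obtain ⟨a1, a2, a3⟩ := ih1 hctx.1 (fun h => hp (Or.inl h)) (fun h => hq (Or.inl h))
    obtain ⟨b1, b2, b3⟩ := ih2 hctx.2 (fun h => hp (Or.inr h)) (fun h => hq (Or.inr h))
    -- singleton transfer helpers
    have sing1 : ∀ x y : Fin 3, dpsupports V ({x} : Set (Fin 3)) θ₁ →
        dpsupports V ({y} : Set (Fin 3)) θ₁ := by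
      intro x y h
      fin_cases x <;> fin_cases y <;> simp_all <;> tauto
    have sing2 : ∀ x y : Fin 3, dpsupports V ({x} : Set (Fin 3)) θ₂ →
        dpsupports V ({y} : Set (Fin 3)) θ₂ := by
      intro x y h
      fin_cases x <;> fin_cases y <;> simp_all <;> tauto
    have dsing1 : ∀ (x : Fin 3) (t : Set (Fin 3)), x ∈ t → dpsupports V t θ₁ →
        dpsupports V ({x} : Set (Fin 3)) θ₁ :=
      fun x t hx ht => dpsupports_down V θ₁ (Set.singleton_subset_iff.mpr hx) ht
    have dsing2 : ∀ (x : Fin 3) (t : Set (Fin 3)), x ∈ t → dpsupports V t θ₂ →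
        dpsupports V ({x} : Set (Fin 3)) θ₂ :=
      fun x t hx ht => dpsupports_down V θ₂ (Set.singleton_subset_iff.mpr hx) ht
    have mk : ∀ (s t₁ t₂ : Set (Fin 3)), dpsupports V t₁ θ₁ → dpsupports V t₂ θ₂ →
        s = t₁ ∪ t₂ → dpsupports V s (DPForm.tensor θ₁ θ₂) :=
      fun s t₁ t₂ h1 h2 he => ⟨t₁, t₂, h1, h2, he⟩
    have e01 : ({0, 1} : Set (Fin 3)) = {0} ∪ {1} := by
      ext x; simp only [Set.mem_insert_iff, Set.mem_union, Set.mem_singleton_iff]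
    have e01' : ({0, 1} : Set (Fin 3)) = {1} ∪ {0} := by
      ext x
      simp only [Set.mem_insert_iff, Set.mem_union, Set.mem_singleton_iff]
      exact or_comm
    have e12 : ({1, 2} : Set (Fin 3)) = {1} ∪ {2} := by
      ext x; simp only [Set.mem_insert_iff, Set.mem_union, Set.mem_singleton_iff]
    have e12' : ({1, 2} : Set (Fin 3)) = {2} ∪ {1} := by
      ext x
      simp only [Set.mem_insert_iff, Set.mem_union, Set.mem_singleton_iff]
      exact or_comm
    have e02 : ({0, 2} : Set (Fin 3)) = {0} ∪ {2} := by
      ext x; simp only [Set.mem_insert_iff, Set.mem_union, Set.mem_singleton_iff]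
    have e02' : ({0, 2} : Set (Fin 3)) = {2} ∪ {0} := by
      ext x
      simp only [Set.mem_insert_iff, Set.mem_union, Set.mem_singleton_iff]
      exact or_comm
    -- singleton swap for the tensor
    have sswap : ∀ x y : Fin 3, dpsupports V ({x} : Set (Fin 3)) (DPForm.tensor θ₁ θ₂) →
        dpsupports V ({y} : Set (Fin 3)) (DPForm.tensor θ₁ θ₂) := by
      rintro x y ⟨t₁, t₂, h1, h2, he⟩
      have hx : x ∈ t₁ ∪ t₂ := by rw [← he]; simp
      rcases hx with hx | hx
      · exact mk _ {y} ∅ (sing1 x y (dsing1 x t₁ hx h1)) (dpsupports_empty V θ₂)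
          (Set.union_empty _).symm
      · exact mk _ ∅ {y} (dpsupports_empty V θ₁) (sing2 x y (dsing2 x t₂ hx h2))
          (Set.empty_union _).symm
    refine ⟨⟨sswap 0 1, sswap 1 0⟩, ⟨sswap 1 2, sswap 2 1⟩, ?_, ?_⟩
    · -- forward: {0,2} → {0,1} ∧ {1,2}
      rintro ⟨t₁, t₂, h1, h2, he⟩
      have ht1 : t₁ ⊆ ({0, 2} : Set (Fin 3)) := Set.subset_union_left.trans he.symm.subset
      have ht2 : t₂ ⊆ ({0, 2} : Set (Fin 3)) := Set.subset_union_right.trans he.symm.subset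
      have h0 : (0 : Fin 3) ∈ t₁ ∪ t₂ := by rw [← he]; simp
      have h2' : (2 : Fin 3) ∈ t₁ ∪ t₂ := by rw [← he]; simp
      rcases h0 with h0 | h0 <;> rcases h2' with h2' | h2'
      · -- 0 ∈ t₁, 2 ∈ t₁
        have hsub : ({0, 2} : Set (Fin 3)) ⊆ t₁ := by
          intro x hx
          simp only [Set.mem_insert_iff, Set.mem_singleton_iff] at hx
          rcases hx with rfl | rfl
          exacts [h0, h2']
        have hS := a3.mp (dpsupports_down V θ₁ hsub h1)
        exact ⟨mk _ {0, 1} ∅ hS.1 (dpsupports_empty V θ₂) (Set.union_empty _).symm,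
          mk _ {1, 2} ∅ hS.2 (dpsupports_empty V θ₂) (Set.union_empty _).symm⟩
      · -- 0 ∈ t₁, 2 ∈ t₂
        have s10 := dsing1 0 t₁ h0 h1
        have s22 := dsing2 2 t₂ h2' h2
        exact ⟨mk _ {0} {1} s10 (sing2 2 1 s22) e01,
          mk _ {1} {2} (sing1 0 1 s10) s22 e12⟩
      · -- 0 ∈ t₂, 2 ∈ t₁
        have s20 := dsing2 0 t₂ h0 h2
        have s12 := dsing1 2 t₁ h2' h1
        exact ⟨mk _ {1} {0} (sing1 2 1 s12) s20 e01',
          mk _ {2} {1} s12 (sing2 0 1 s20) e12'⟩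
      · -- 0 ∈ t₂, 2 ∈ t₂
        have hsub : ({0, 2} : Set (Fin 3)) ⊆ t₂ := by
          intro x hx
          simp only [Set.mem_insert_iff, Set.mem_singleton_iff] at hx
          rcases hx with rfl | rfl
          exacts [h0, h2']
        have hS := b3.mp (dpsupports_down V θ₂ hsub h2)
        exact ⟨mk _ ∅ {0, 1} (dpsupports_empty V θ₁) hS.1 (Set.empty_union _).symm,
          mk _ ∅ {1, 2} (dpsupports_empty V θ₁) hS.2 (Set.empty_union _).symm⟩
    · -- backward: {0,1} ∧ {1,2} → {0,2}
      rintro ⟨⟨t₁, t₂, h1, h2, he⟩, ⟨u₁, u₂, g1, g2, ge⟩⟩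
      have ht2 : t₂ ⊆ ({0, 1} : Set (Fin 3)) := Set.subset_union_right.trans he.symm.subset
      have hu2 : u₂ ⊆ ({1, 2} : Set (Fin 3)) := Set.subset_union_right.trans ge.symm.subset
      have ht1 : t₁ ⊆ ({0, 1} : Set (Fin 3)) := Set.subset_union_left.trans he.symm.subset
      have hu1 : u₁ ⊆ ({1, 2} : Set (Fin 3)) := Set.subset_union_left.trans ge.symm.subset
      have h0 : (0 : Fin 3) ∈ t₁ ∪ t₂ := by rw [← he]; simp
      have h2' : (2 : Fin 3) ∈ u₁ ∪ u₂ := by rw [← ge]; simp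
      rcases h0 with h0 | h0 <;> rcases h2' with h2' | h2'
      · -- 0 ∈ t₁, 2 ∈ u₁ : need a θ₂-singleton or both t₂, u₂ empty
        rcases Set.eq_empty_or_nonempty t₂ with rfl | ⟨x, hx⟩
        · rcases Set.eq_empty_or_nonempty u₂ with rfl | ⟨x, hx⟩
          · have het : ({0, 1} : Set (Fin 3)) ⊆ t₁ := by rw [he]; simp
            have geu : ({1, 2} : Set (Fin 3)) ⊆ u₁ := by rw [ge]; simp
            have hS := a3.mpr ⟨dpsupports_down V θ₁ het h1, dpsupports_down V θ₁ geu g1⟩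
            exact mk _ {0, 2} ∅ hS (dpsupports_empty V θ₂) (Set.union_empty _).symm
          · have s2x := dsing2 x u₂ hx g2
            exact mk _ {0} {2} (dsing1 0 t₁ h0 h1) (sing2 x 2 s2x) e02
        · have s2x := dsing2 x t₂ hx h2
          exact mk _ {0} {2} (dsing1 0 t₁ h0 h1) (sing2 x 2 s2x) e02
      · -- 0 ∈ t₁, 2 ∈ u₂
        exact mk _ {0} {2} (dsing1 0 t₁ h0 h1) (dsing2 2 u₂ h2' g2) e02
      · -- 0 ∈ t₂, 2 ∈ u₁
        exact mk _ {2} {0} (dsing1 2 u₁ h2' g1) (dsing2 0 t₂ h0 h2) e02'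
      · -- 0 ∈ t₂, 2 ∈ u₂ : need a θ₁-singleton or both t₁, u₁ empty
        rcases Set.eq_empty_or_nonempty t₁ with rfl | ⟨x, hx⟩
        · rcases Set.eq_empty_or_nonempty u₁ with rfl | ⟨x, hx⟩
          · have het : ({0, 1} : Set (Fin 3)) ⊆ t₂ := by rw [he]; simp
            have geu : ({1, 2} : Set (Fin 3)) ⊆ u₂ := by rw [ge]; simp
            have hS := b3.mpr ⟨dpsupports_down V θ₂ het h2, dpsupports_down V θ₂ geu g2⟩
            exact mk _ ∅ {0, 2} (dpsupports_empty V θ₁) hS (Set.empty_union _).symm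
          · have s1x := dsing1 x u₁ hx g1
            exact mk _ {2} {0} (sing1 x 2 s1x) (dsing2 0 t₂ h0 h2) e02'
        · have s1x := dsing1 x t₁ hx h1
          exact mk _ {0} {2} (sing1 x 0 s1x) (dsing2 2 u₂ h2' g2) e02
end Main

/-- the global disjunction ⩔ is strongly undefinable in D⁺: for
every D⁺ context φ(a,b) and distinct atoms p, q not occurring in φ(a,b) (and
distinct from a, b), φ(=(p),=(q)) is not equivalent in M_pq to =(p) ⩔ =(q). -/
theorem gdisj_strongly_undefinable_plus {α : Type} [DecidableEq α]
    (p q a b : α)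
    (hpq : p ≠ q) (hpa : p ≠ a) (hpb : p ≠ b) (hqa : q ≠ a) (hqb : q ≠ b)
    (φ : DPForm α) (hctx : φ.isContext a b)
    (hp : p ∉ φ.dpatoms) (hq : q ∉ φ.dpatoms) :
    ¬ ∀ s : Set (Fin 3),
        dpsupports (VDpq p q) s (dpsubstAB a b (pcon p) (pcon q) φ) ↔
          (dpsupports (VDpq p q) s (pcon p) ∨
            dpsupports (VDpq p q) s (pcon q)) := by
  intro h
  have hP01 : dpsupports (VDpq p q) ({0, 1} : Set (Fin 3)) (pcon p) := by
    rw [pcon_iff]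
    intro w hw w' hw'
    simp only [Set.mem_insert_iff, Set.mem_singleton_iff] at hw hw'
    rw [vd_p hpq, vd_p hpq]
    tauto
  have hQ12 : dpsupports (VDpq p q) ({1, 2} : Set (Fin 3)) (pcon q) := by
    rw [pcon_iff]
    intro w hw w' hw'
    simp only [Set.mem_insert_iff, Set.mem_singleton_iff] at hw hw'
    rw [vd_q hpq, vd_q hpq]
    tauto
  have inv := dpinv_main (a := a) (b := b) hpq φ hctx hp hq
  have h1 : dpsupports (VDpq p q) ({0, 1} : Set (Fin 3))
      (dpsubstAB a b (pcon p) (pcon q) φ) := (h _).mpr (Or.inl hP01)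
  have h2 : dpsupports (VDpq p q) ({1, 2} : Set (Fin 3))
      (dpsubstAB a b (pcon p) (pcon q) φ) := (h _).mpr (Or.inr hQ12)
  have h3 := inv.2.2.mpr ⟨h1, h2⟩
  rcases (h _).mp h3 with hc | hc
  · rw [pcon_iff] at hc
    have := hc 0 (by simp) 2 (by simp)
    rw [vd_p hpq, vd_p hpq] at this
    exact absurd this (by decide)
  · rw [pcon_iff] at hc
    have := hc 0 (by simp) 2 (by simp)
    rw [vd_q hpq, vd_q hpq] at this
    exact absurd this (by decide)
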